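/- arXiv:2011.13460 — 2 statements merged into one kernel-verified Lean document; each statement's English description precedes it below -/
import Mathlib

section
/- Let j : Y → X be a continuous surjection of compact Hausdorff spaces, and suppose the set X₁ = {x ∈ X : the fiber j⁻¹(x) is a singleton} is dense in X. Then K = closure(j⁻¹(X₁)) is the unique minimal closed subset of Y such that j(K) = X: j(K) = X, K is contained in every closed F ⊆ Y with j(F) = X, and K is the unique closed set with full image that is minimal among such sets. -/
/-! A point of `Y` over a singleton fiber lies in every set with full image, hence so does the
closure of all such points whenever that set is closed; this gives `K ⊆ F`. Conversely `j '' K`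
is compact, hence closed, and contains the dense set `X₁`, so it is all of `X`. Being the least
closed set with full image, `K` is then the unique minimal one. -/

open Set

section

variable {Y X : Type*} {j : Y → X}

lemma preimage_setOf_existsUnique_subset {F : Set Y} (hF : j '' F = univ) :
    j ⁻¹' {x | ∃! y, j y = x} ⊆ F := by
  intro y hy
  obtain ⟨w, hwF, hw⟩ : j y ∈ j '' F := hF ▸ mem_univ _
  rwa [← hy.unique hw rfl]

lemma closure_preimage_setOf_existsUnique_subset [TopologicalSpace Y] {F : Set Y}
    (hFc : IsClosed F) (hF : j '' F = univ) :
    closure (j ⁻¹' {x | ∃! y, j y = x}) ⊆ F :=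
  closure_minimal (preimage_setOf_existsUnique_subset hF) hFc

lemma image_closure_preimage_eq_univ_of_dense [TopologicalSpace Y] [CompactSpace Y]
    [TopologicalSpace X] [T2Space X] (hj : Continuous j) {S : Set X} (hS : S ⊆ range j)
    (hd : Dense S) : j '' closure (j ⁻¹' S) = univ := by
  have hclosed : IsClosed (j '' closure (j ⁻¹' S)) :=
    (isClosed_closure.isCompact.image hj).isClosed
  have hsub : S ⊆ j '' closure (j ⁻¹' S) :=
    (image_preimage_eq_of_subset hS).symm.subset.trans (image_mono subset_closure)
  exact univ_subset_iff.mp (hd.closure_eq ▸ closure_minimal hsub hclosed)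

end

theorem closure_preimage_singleton_fibers_unique_minimal_general {Y X : Type*}
    [TopologicalSpace Y] [CompactSpace Y]
    [TopologicalSpace X] [T2Space X]
    (j : Y → X) (hj : Continuous j)
    (X₁ : Set X) (hX₁ : X₁ = {x : X | ∃! y : Y, j y = x}) (hd : Dense X₁)
    (K : Set Y) (hK : K = closure (j ⁻¹' X₁)) :
    j '' K = Set.univ ∧
      (∀ F : Set Y, IsClosed F → j '' F = Set.univ → K ⊆ F) ∧
      (∀ F ⊆ K, IsClosed F → j '' F = Set.univ → F = K) ∧
      (∀ L : Set Y, IsClosed L → j '' L = Set.univ →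
        (∀ F ⊆ L, IsClosed F → j '' F = Set.univ → F = L) → L = K) := by
  subst hX₁ hK
  have hfull : j '' closure (j ⁻¹' {x | ∃! y, j y = x}) = univ :=
    image_closure_preimage_eq_univ_of_dense hj (fun x hx => hx.exists) hd
  have hleast : ∀ F : Set Y, IsClosed F → j '' F = univ →
      closure (j ⁻¹' {x | ∃! y, j y = x}) ⊆ F :=
    fun F hFc hF => closure_preimage_setOf_existsUnique_subset hFc hF
  exact ⟨hfull, hleast, fun F hFK hFc hF => hFK.antisymm (hleast F hFc hF),
    fun L hLc hL hLmin => (hLmin _ (hleast L hLc hL) isClosed_closure hfull).symm⟩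

/-- If the set `X₁` of points of `X` with singleton fiber is dense, then
`K = closure (j⁻¹(X₁))` is the unique minimal closed subset of `Y` with `j(K) = X`:
it has full image, is contained in every closed set with full image, is minimal, and is
the unique minimal such set. -/
theorem closure_preimage_singleton_fibers_unique_minimal {Y X : Type*}
    [TopologicalSpace Y] [CompactSpace Y] [T2Space Y]
    [TopologicalSpace X] [CompactSpace X] [T2Space X]
    (j : Y → X) (hj : Continuous j) (hjs : Function.Surjective j)
    (X₁ : Set X) (hX₁ : X₁ = {x : X | ∃! y : Y, j y = x}) (hd : Dense X₁)
    (K : Set Y) (hK : K = closure (j ⁻¹' X₁)) :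
    j '' K = Set.univ ∧
      (∀ F : Set Y, IsClosed F → j '' F = Set.univ → K ⊆ F) ∧
      (∀ F ⊆ K, IsClosed F → j '' F = Set.univ → F = K) ∧
      (∀ L : Set Y, IsClosed L → j '' L = Set.univ →
        (∀ F ⊆ L, IsClosed F → j '' F = Set.univ → F = L) → L = K) :=
  closure_preimage_singleton_fibers_unique_minimal_general j hj X₁ hX₁ hd K hK
end

section
/- Let j : Y → X be a continuous surjection of compact Hausdorff spaces and suppose K ⊆ Y is the unique minimal closed set with j(K) = X. Let U ⊆ Y be an open set containing K and let F ⊊ X be a proper closed subset. Then j(Y \ U) ∪ F is a proper subset of X. -/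
/-!
If `j(Y \ U) ∪ F` were all of `X`, then `(Y \ U) ∪ j⁻¹(F)` would be a closed set mapping onto `X`.
By Zorn's lemma (chains of such sets have intersections still mapping onto `X`, by compactness
of the fibres) it contains a minimal one, which by uniqueness is `K`. As `K ⊆ U`, this forces
`K ⊆ j⁻¹(F)`, hence `X = j(K) ⊆ F`, contradicting `F ≠ X`.
-/

open Set

section

variable {Y X : Type*} [TopologicalSpace Y] [CompactSpace Y] [TopologicalSpace X] [T1Space X]
  {j : Y → X}

lemma image_sInter_eq_univ_of_isChain (hj : Continuous j) {c : Set (Set Y)}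
    (hchain : IsChain (· ⊆ ·) c) (hne : c.Nonempty) (hclosed : ∀ s ∈ c, IsClosed s)
    (hfull : ∀ s ∈ c, j '' s = univ) : j '' ⋂₀ c = univ := by
  refine eq_univ_of_forall fun x => ?_
  have : Nonempty c := hne.to_subtype
  have hfiber_closed (s : c) : IsClosed ((s : Set Y) ∩ j ⁻¹' {x}) :=
    (hclosed s s.2).inter (isClosed_singleton.preimage hj)
  have hfiber_nonempty (s : c) : ((s : Set Y) ∩ j ⁻¹' {x}).Nonempty := by
    obtain ⟨y, hy, rfl⟩ := (hfull s s.2).symm ▸ mem_univ x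
    exact ⟨y, hy, rfl⟩
  have hchain' : IsChain (· ⊇ ·) c := hchain.symm
  have hdir : Directed (· ⊇ ·) fun s : c => (s : Set Y) ∩ j ⁻¹' {x} := fun s t =>
    let ⟨u, hu, hsu, htu⟩ := hchain'.directedOn s s.2 t t.2
    ⟨⟨u, hu⟩, inter_subset_inter_left _ hsu, inter_subset_inter_left _ htu⟩
  obtain ⟨y, hy⟩ := IsCompact.nonempty_iInter_of_directed_nonempty_isCompact_isClosed
    _ hdir hfiber_nonempty (fun s => (hfiber_closed s).isCompact) hfiber_closed
  simp only [mem_iInter, mem_inter_iff, mem_preimage, mem_singleton_iff] at hy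
  exact ⟨y, fun s hs => (hy ⟨s, hs⟩).1, (hy ⟨_, hne.some_mem⟩).2⟩

lemma exists_minimal_isClosed_image_eq_univ_subset (hj : Continuous j) {C : Set Y}
    (hC : IsClosed C) (hCfull : j '' C = univ) :
    ∃ L ⊆ C, Minimal (fun L => IsClosed L ∧ j '' L = univ) L :=
  zorn_superset_nonempty {L | IsClosed L ∧ j '' L = univ}
    (fun c hc hchain hne => ⟨⋂₀ c,
      ⟨isClosed_sInter fun _ hs => (hc hs).1,
        image_sInter_eq_univ_of_isChain hj hchain hne (fun _ hs => (hc hs).1)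
          (fun _ hs => (hc hs).2)⟩,
      fun _ hs => sInter_subset_of_mem hs⟩)
    C ⟨hC, hCfull⟩

end

theorem image_compl_union_proper_general {Y X : Type*}
    [TopologicalSpace Y] [CompactSpace Y]
    [TopologicalSpace X] [T2Space X]
    (j : Y → X) (hj : Continuous j) (hjs : Function.Surjective j)
    (K : Set Y)
    (hKuniq : ∀ L : Set Y, IsClosed L → j '' L = Set.univ →
      (∀ F ⊆ L, IsClosed F → j '' F = Set.univ → F = L) → L = K)
    (U : Set Y) (hU : IsOpen U) (hKU : K ⊆ U)
    (F : Set X) (hF : IsClosed F) (hFp : F ⊂ Set.univ) :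
    j '' (Set.univ \ U) ∪ F ⊂ Set.univ := by
  rw [ssubset_univ_iff]
  intro hcover
  have hC : IsClosed ((univ \ U) ∪ j ⁻¹' F) := (isClosed_univ.sdiff hU).union (hF.preimage hj)
  have hCfull : j '' ((univ \ U) ∪ j ⁻¹' F) = univ := by
    rw [image_union, image_preimage_eq F hjs, hcover]
  obtain ⟨L, hLC, hLmin⟩ := exists_minimal_isClosed_image_eq_univ_subset hj hC hCfull
  obtain rfl : L = K := hKuniq L hLmin.prop.1 hLmin.prop.2
    fun G hGL hGc hGfull => hLmin.eq_of_subset ⟨hGc, hGfull⟩ hGL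
  have hLF : L ⊆ j ⁻¹' F := fun y hy => (hLC hy).resolve_left fun h => h.2 (hKU hy)
  exact hFp.ne (univ_subset_iff.mp (hLmin.prop.2 ▸ image_subset_iff.mpr hLF))

/-- If `K` is the unique minimal closed subset of `Y` with `j(K) = X`, `U` is an open set
containing `K`, and `F ⊊ X` is a proper closed subset, then `j(Y \ U) ∪ F ⊊ X`. -/
theorem image_compl_union_proper {Y X : Type*}
    [TopologicalSpace Y] [CompactSpace Y] [T2Space Y]
    [TopologicalSpace X] [CompactSpace X] [T2Space X]
    (j : Y → X) (hj : Continuous j) (hjs : Function.Surjective j)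
    (K : Set Y) (hKc : IsClosed K) (hKfull : j '' K = Set.univ)
    (hKmin : ∀ F ⊆ K, IsClosed F → j '' F = Set.univ → F = K)
    (hKuniq : ∀ L : Set Y, IsClosed L → j '' L = Set.univ →
      (∀ F ⊆ L, IsClosed F → j '' F = Set.univ → F = L) → L = K)
    (U : Set Y) (hU : IsOpen U) (hKU : K ⊆ U)
    (F : Set X) (hF : IsClosed F) (hFp : F ⊂ Set.univ) :
    j '' (Set.univ \ U) ∪ F ⊂ Set.univ :=
  image_compl_union_proper_general j hj hjs K hKuniq U hU hKU F hF hFp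
end
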